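/- arXiv:1907.09124 — 3 statements merged into one kernel-verified Lean document; each statement's English description precedes it below -/
import Mathlib

section
/- Completeness of DAL (Segerberg): for every set Φ of DAL formulas and every DAL formula φ, if φ is an algebraic consequence of Φ (Φ ⊨ φ), then φ is provable from Φ in the Hilbert system for DAL (Φ ⊢ φ). -/
namespace DAL

/-- Actions of DAL over a countable set of basic action symbols. -/
inductive Act : Type where
  | basic : ℕ → Act
  | join : Act → Act → Act
  | meet : Act → Act → Act
  | compl : Act → Act
  | zero : Act
  | one : Act

/-- Formulas of DAL. -/
inductive Fml : Type where
  | neg : Fml → Fml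
  | or : Fml → Fml → Fml
  | eq : Act → Act → Fml
  | perm : Act → Fml
  | forb : Act → Fml

/-- Material implication, defined from ¬ and ∨. -/
def fImp (p q : Fml) : Fml := .or (.neg p) q
/-- Conjunction, defined from ¬ and ∨. -/
def fAnd (p q : Fml) : Fml := .neg (.or (.neg p) (.neg q))
/-- Biconditional. -/
def fIff (p q : Fml) : Fml := fAnd (fImp p q) (fImp q p)
/-- Verum. -/
def fTop : Fml := .or (.eq .zero .zero) (.neg (.eq .zero .zero))
/-- Falsum. -/
def fBot : Fml := .neg fTop

/-- `ARepl a b γ γ'` : γ' is obtained from γ by replacing some (possibly zero)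
occurrences of the action `a` with the action `b`. -/
inductive ARepl (a b : Act) : Act → Act → Prop where
  | repl : ARepl a b a b
  | basic (n : ℕ) : ARepl a b (.basic n) (.basic n)
  | zero : ARepl a b .zero .zero
  | one : ARepl a b .one .one
  | join {x x' y y'} : ARepl a b x x' → ARepl a b y y' → ARepl a b (.join x y) (.join x' y')
  | meet {x x' y y'} : ARepl a b x x' → ARepl a b y y' → ARepl a b (.meet x y) (.meet x' y')
  | compl {x x'} : ARepl a b x x' → ARepl a b (.compl x) (.compl x')

/-- `FRepl a b φ φ'` : φ' is obtained from φ by replacing some (possibly zero)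
occurrences of the action `a` with the action `b`. -/
inductive FRepl (a b : Act) : Fml → Fml → Prop where
  | neg {p p'} : FRepl a b p p' → FRepl a b (.neg p) (.neg p')
  | or {p p' q q'} : FRepl a b p p' → FRepl a b q q' → FRepl a b (.or p q) (.or p' q')
  | eq {x x' y y'} : ARepl a b x x' → ARepl a b y y' → FRepl a b (.eq x y) (.eq x' y')
  | perm {x x'} : ARepl a b x x' → FRepl a b (.perm x) (.perm x')
  | forb {x x'} : ARepl a b x x' → FRepl a b (.forb x) (.forb x')

/-- The axioms of the Hilbert system for DAL: a complete classical axiomatization of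
¬, ∨; Boolean algebra axioms for actions plus ¬(0=1); equality and substitution
axioms; and the deontic axioms D1, D2, D3. -/
inductive Ax : Fml → Prop where
  -- classical axioms for ¬ and ∨ (Principia Mathematica style)
  | pl1 (p : Fml) : Ax (fImp (.or p p) p)
  | pl2 (p q : Fml) : Ax (fImp p (.or p q))
  | pl3 (p q : Fml) : Ax (fImp (.or p q) (.or q p))
  | pl4 (p q r : Fml) : Ax (fImp (fImp p q) (fImp (.or r p) (.or r q)))
  -- Boolean algebra axioms for actions
  | joinComm (x y : Act) : Ax (.eq (.join x y) (.join y x))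
  | meetComm (x y : Act) : Ax (.eq (.meet x y) (.meet y x))
  | joinAssoc (x y z : Act) : Ax (.eq (.join x (.join y z)) (.join (.join x y) z))
  | meetAssoc (x y z : Act) : Ax (.eq (.meet x (.meet y z)) (.meet (.meet x y) z))
  | joinDistrib (x y z : Act) : Ax (.eq (.join x (.meet y z)) (.meet (.join x y) (.join x z)))
  | meetDistrib (x y z : Act) : Ax (.eq (.meet x (.join y z)) (.join (.meet x y) (.meet x z)))
  | joinZero (x : Act) : Ax (.eq (.join x .zero) x)
  | meetOne (x : Act) : Ax (.eq (.meet x .one) x)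
  | joinCompl (x : Act) : Ax (.eq (.join x (.compl x)) .one)
  | meetCompl (x : Act) : Ax (.eq (.meet x (.compl x)) .zero)
  | nondeg : Ax (.neg (.eq .zero .one))
  -- equality axioms
  | eqRefl (x : Act) : Ax (.eq x x)
  | eqSymm (x y : Act) : Ax (fImp (.eq x y) (.eq y x))
  | eqTrans (x y z : Act) : Ax (fImp (.eq x y) (fImp (.eq y z) (.eq x z)))
  -- substitution axiom
  | subst {x y : Act} {p q : Fml} : FRepl x y p q → Ax (fImp (.eq x y) (fImp p q))
  -- deontic axioms
  | d1 (x y : Act) : Ax (fIff (.perm (.join x y)) (fAnd (.perm x) (.perm y)))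
  | d2 (x y : Act) : Ax (fIff (.forb (.join x y)) (fAnd (.forb x) (.forb y)))
  | d3 (x : Act) : Ax (fIff (.eq x .zero) (fAnd (.perm x) (.forb x)))

/-- `IsProof Φ s` : the finite sequence (list) `s` is a proof from `Φ`: every member
is an axiom, a member of `Φ`, or follows from two earlier members by modus ponens. -/
def IsProof (Φ : Set Fml) (s : List Fml) : Prop :=
  ∀ (k : ℕ) (hk : k < s.length),
    Ax (s[k]'hk) ∨ (s[k]'hk) ∈ Φ ∨
      ∃ (i j : ℕ) (hi : i < k) (hj : j < k),
        s[j]'(Nat.lt_trans hj hk) = fImp (s[i]'(Nat.lt_trans hi hk)) (s[k]'hk)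

/-- `Prov Φ φ` (Φ ⊢ φ) : there is a proof of φ from Φ. -/
def Prov (Φ : Set Fml) (φ : Fml) : Prop :=
  ∃ s : List Fml, IsProof Φ s ∧ s.getLast? = some φ

/-- Φ is ⊢-consistent. -/
def Consistent (Φ : Set Fml) : Prop := ¬ Prov Φ fBot

/-- Deductive closure. -/
def Cn (Ψ : Set Fml) : Set Fml := {φ | Prov Ψ φ}

end DAL

namespace DAL

/-- An ideal of a Boolean algebra: closed under + (⊔) and under · (⊓) with
arbitrary elements. -/
def IsIdeal {E : Type*} [BooleanAlgebra E] (I : Set E) : Prop :=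
  (∀ x ∈ I, ∀ y ∈ I, x ⊔ y ∈ I) ∧ (∀ x ∈ I, ∀ a : E, x ⊓ a ∈ I)

/-- Homomorphic extension of a valuation of basic actions to all actions. -/
def evalAct {E : Type*} [BooleanAlgebra E] (I : ℕ → E) : Act → E
  | .basic n => I n
  | .join a b => evalAct I a ⊔ evalAct I b
  | .meet a b => evalAct I a ⊓ evalAct I b
  | .compl a => (evalAct I a)ᶜ
  | .zero => ⊥
  | .one => ⊤

/-- Satisfaction of a formula in a deontic action algebra ⟨E, P, F⟩ under a
valuation `I`. -/
def Sat {E : Type*} [BooleanAlgebra E] (P F : Set E) (I : ℕ → E) : Fml → Prop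
  | .neg φ => ¬ Sat P F I φ
  | .or φ ψ => Sat P F I φ ∨ Sat P F I ψ
  | .eq a b => evalAct I a = evalAct I b
  | .perm a => evalAct I a ∈ P
  | .forb a => evalAct I a ∈ F

/-- Algebraic consequence (Φ ⊨ φ): every deontic action algebra (nondegenerate
Boolean algebra `E` with ideals `P`, `F` such that P ∩ F = {0}) and valuation
satisfying all formulas of Φ also satisfies φ. -/
def ACons (Φ : Set Fml) (φ : Fml) : Prop :=
  ∀ (E : Type) [BooleanAlgebra E] [Nontrivial E] (P F : Set E) (I : ℕ → E),
    IsIdeal P → IsIdeal F → P ∩ F = {⊥} →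
    (∀ ψ ∈ Φ, Sat P F I ψ) → Sat P F I φ

end DAL

/-!
If `Φ ⊬ φ`, extend `Φ ∪ {¬φ}` to a maximal consistent set `T` (Zorn's lemma; derivations
are finite). Actions modulo `T`-provable equality form a Boolean algebra, the
Lindenbaum–Tarski algebra, which is nondegenerate because `T ⊢ ¬(0 = 1)`. The classes of
actions `α` with `T ⊢ P(α)`, resp. `T ⊢ F(α)`, are ideals by D1 and D2, and by D3 they meet
only in `0`. Under the valuation `aᵢ ↦ [aᵢ]` a formula holds exactly when it lies in `T`, so
this deontic action algebra satisfies `Φ` but not `φ`.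
-/

abbrev BooleanAlgebra.ofLaws {α : Type*} [Max α] [Min α] [Compl α] [Top α] [Bot α]
    (sup_comm : ∀ a b : α, a ⊔ b = b ⊔ a) (inf_comm : ∀ a b : α, a ⊓ b = b ⊓ a)
    (sup_assoc : ∀ a b c : α, a ⊔ (b ⊔ c) = a ⊔ b ⊔ c)
    (inf_assoc : ∀ a b c : α, a ⊓ (b ⊓ c) = a ⊓ b ⊓ c)
    (sup_inf_left : ∀ a b c : α, a ⊔ b ⊓ c = (a ⊔ b) ⊓ (a ⊔ c))
    (inf_sup_left : ∀ a b c : α, a ⊓ (b ⊔ c) = a ⊓ b ⊔ a ⊓ c)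
    (sup_bot : ∀ a : α, a ⊔ ⊥ = a) (inf_top : ∀ a : α, a ⊓ ⊤ = a)
    (sup_compl : ∀ a : α, a ⊔ aᶜ = ⊤) (inf_compl : ∀ a : α, a ⊓ aᶜ = ⊥) :
    BooleanAlgebra α :=
  have sup_idem (a : α) : a ⊔ a = a := by
    rw [← inf_top (a ⊔ a), ← sup_compl a, ← sup_inf_left, inf_compl, sup_bot]
  have inf_idem (a : α) : a ⊓ a = a := by
    rw [← sup_bot (a ⊓ a), ← inf_compl a, ← inf_sup_left, sup_compl, inf_top]
  have sup_top (a : α) : a ⊔ ⊤ = ⊤ := by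
    rw [← sup_compl a, sup_assoc, sup_idem]
  have inf_bot (a : α) : a ⊓ ⊥ = ⊥ := by
    rw [← inf_compl a, inf_assoc, inf_idem]
  have sup_inf_self (a b : α) : a ⊔ a ⊓ b = a := calc
    a ⊔ a ⊓ b = a ⊓ ⊤ ⊔ a ⊓ b := by rw [inf_top]
    _ = a := by rw [← inf_sup_left, sup_comm, sup_top, inf_top]
  have inf_sup_self (a b : α) : a ⊓ (a ⊔ b) = a := calc
    a ⊓ (a ⊔ b) = (a ⊔ ⊥) ⊓ (a ⊔ b) := by rw [sup_bot]
    _ = a := by rw [← sup_inf_left, inf_comm, inf_bot, sup_bot]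
  letI : Lattice α := Lattice.mk' sup_comm (fun a b c => (sup_assoc a b c).symm) inf_comm
    (fun a b c => (inf_assoc a b c).symm) sup_inf_self inf_sup_self
  { DistribLattice.ofInfSupLe fun a b c => (inf_sup_left a b c).le with
    compl := compl
    top := ⊤
    bot := ⊥
    le_top := fun a => sup_eq_right.1 (sup_top a)
    bot_le := fun a => inf_eq_right.1 (inf_bot a)
    inf_compl_le_bot := fun a => (inf_compl a).le
    top_le_sup_compl := fun a => (sup_compl a).ge }

namespace DAL

theorem isIdeal_of_sup_mem_iff {E : Type*} [BooleanAlgebra E] {I : Set E}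
    (h : ∀ a b, a ⊔ b ∈ I ↔ a ∈ I ∧ b ∈ I) : IsIdeal I :=
  ⟨fun a ha b hb => (h a b).2 ⟨ha, hb⟩,
    fun a ha b => ((h a (a ⊓ b)).1 (by rwa [sup_inf_self])).2⟩

inductive Der (Φ : Set Fml) : Fml → Prop
  | ax {φ} : Ax φ → Der Φ φ
  | hyp {φ} : φ ∈ Φ → Der Φ φ
  | mp {p q} : Der Φ (fImp p q) → Der Φ p → Der Φ q

def Justified (Φ : Set Fml) (s : List Fml) (φ : Fml) : Prop :=
  Ax φ ∨ φ ∈ Φ ∨ ∃ p ∈ s, fImp p φ ∈ s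

section Proofs

variable {Φ : Set Fml} {s t : List Fml} {φ : Fml}

theorem Justified.mono (h : Justified Φ s φ) (hst : s ⊆ t) : Justified Φ t φ := by
  rcases h with h | h | ⟨p, hp, hpφ⟩
  exacts [.inl h, .inr (.inl h), .inr (.inr ⟨p, hst hp, hst hpφ⟩)]

theorem isProof_nil : IsProof Φ [] := fun _ hk => absurd hk (Nat.not_lt_zero _)

theorem isProof_concat_iff : IsProof Φ (s ++ [φ]) ↔ IsProof Φ s ∧ Justified Φ s φ := by
  have get_left {k : ℕ} (hk : k < s.length) : (s ++ [φ])[k]'(by simp; omega) = s[k] :=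
    List.getElem_append_left hk
  have get_last : (s ++ [φ])[s.length]'(by simp) = φ := List.getElem_concat_length rfl _
  constructor
  · intro h
    refine ⟨fun k hk => ?_, ?_⟩
    · rcases h k (by simp; omega) with h | h | ⟨i, j, hi, hj, hij⟩
      · exact .inl (get_left hk ▸ h)
      · exact .inr (.inl (get_left hk ▸ h))
      · refine .inr (.inr ⟨i, j, hi, hj, ?_⟩)
        rwa [get_left, get_left, get_left] at hij
    · rcases h s.length (by simp) with h | h | ⟨i, j, hi, hj, hij⟩
      · exact .inl (get_last ▸ h)
      · exact .inr (.inl (get_last ▸ h))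
      · rw [get_left hi, get_left hj, get_last] at hij
        exact .inr (.inr ⟨s[i], List.getElem_mem hi, hij ▸ List.getElem_mem hj⟩)
  · rintro ⟨hs, hφ⟩ k hk
    obtain hk' | rfl : k < s.length ∨ k = s.length := by simp at hk; omega
    · rcases hs k hk' with h | h | ⟨i, j, hi, hj, hij⟩
      · exact .inl ((get_left hk').symm ▸ h)
      · exact .inr (.inl ((get_left hk').symm ▸ h))
      · refine .inr (.inr ⟨i, j, hi, hj, ?_⟩)
        rwa [get_left, get_left, get_left]
    · rw [get_last]
      rcases hφ with h | h | ⟨p, hp, hpφ⟩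
      · exact .inl h
      · exact .inr (.inl h)
      · obtain ⟨i, hi, rfl⟩ := List.mem_iff_getElem.1 hp
        obtain ⟨j, hj, hj'⟩ := List.mem_iff_getElem.1 hpφ
        exact .inr (.inr ⟨i, j, hi, hj, by rw [get_left hj, get_left hi, hj']⟩)

theorem isProof_append (hs : IsProof Φ s) (ht : IsProof Φ t) : IsProof Φ (s ++ t) := by
  induction t using List.reverseRecOn with
  | nil => simpa using hs
  | append_singleton t φ ih =>
    obtain ⟨ht, hφ⟩ := isProof_concat_iff.1 ht
    rw [← List.append_assoc, isProof_concat_iff]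
    exact ⟨ih ht, hφ.mono (List.subset_append_right s t)⟩

theorem Der.of_justified (hs : ∀ ψ ∈ s, Der Φ ψ) (h : Justified Φ s φ) : Der Φ φ := by
  rcases h with h | h | ⟨p, hp, hpφ⟩
  exacts [.ax h, .hyp h, .mp (hs _ hpφ) (hs p hp)]

theorem IsProof.der (hs : IsProof Φ s) : ∀ ψ ∈ s, Der Φ ψ := by
  induction s using List.reverseRecOn with
  | nil => simp
  | append_singleton s φ ih =>
    obtain ⟨hs, hφ⟩ := isProof_concat_iff.1 hs
    have hder := ih hs
    simp only [List.mem_append, List.mem_singleton]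
    rintro ψ (hψ | rfl)
    exacts [hder ψ hψ, Der.of_justified hder hφ]

theorem prov_iff_exists_isProof : Prov Φ φ ↔ ∃ s, IsProof Φ (s ++ [φ]) := by
  simp only [Prov, List.getLast?_eq_some_iff]
  exact ⟨fun ⟨_, hs, s, h⟩ => ⟨s, h ▸ hs⟩, fun ⟨s, hs⟩ => ⟨_, hs, s, rfl⟩⟩

theorem prov_iff_der : Prov Φ φ ↔ Der Φ φ := by
  rw [prov_iff_exists_isProof]
  constructor
  · rintro ⟨s, hs⟩
    exact hs.der φ (List.mem_append_right s (List.mem_singleton_self φ))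
  · intro h
    induction h with
    | ax h => exact ⟨[], isProof_concat_iff.2 ⟨isProof_nil, .inl h⟩⟩
    | hyp h => exact ⟨[], isProof_concat_iff.2 ⟨isProof_nil, .inr (.inl h)⟩⟩
    | @mp p q _ _ ihpq ihp =>
      obtain ⟨s, hs⟩ := ihpq
      obtain ⟨t, ht⟩ := ihp
      refine ⟨(s ++ [fImp p q]) ++ (t ++ [p]), isProof_concat_iff.2 ⟨isProof_append hs ht, ?_⟩⟩
      exact .inr (.inr ⟨p, by simp, by simp⟩)

end Proofs

namespace Der

variable {Φ Ψ : Set Fml} {p q r φ ψ : Fml}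

theorem mono (h : Der Φ φ) (hΦΨ : Φ ⊆ Ψ) : Der Ψ φ := by
  induction h with
  | ax h => exact .ax h
  | hyp h => exact .hyp (hΦΨ h)
  | mp _ _ ihpq ihp => exact .mp ihpq ihp

theorem exists_finite_subset (h : Der Φ φ) : ∃ Γ ⊆ Φ, Γ.Finite ∧ Der Γ φ := by
  induction h with
  | ax h => exact ⟨∅, Set.empty_subset _, Set.finite_empty, .ax h⟩
  | @hyp φ h => exact ⟨{φ}, Set.singleton_subset_iff.2 h, Set.finite_singleton φ, .hyp rfl⟩
  | mp _ _ ihpq ihp =>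
    obtain ⟨Γ, hΓ, hΓfin, hpq⟩ := ihpq
    obtain ⟨Δ, hΔ, hΔfin, hp⟩ := ihp
    exact ⟨Γ ∪ Δ, Set.union_subset hΓ hΔ, hΓfin.union hΔfin,
      .mp (hpq.mono Set.subset_union_left) (hp.mono Set.subset_union_right)⟩

theorem or_inl_imp : Der Φ (fImp p (.or p q)) := .ax (.pl2 p q)

theorem or_comm_imp : Der Φ (fImp (.or p q) (.or q p)) := .ax (.pl3 p q)

theorem or_imp_or_right (h : Der Φ (fImp p q)) : Der Φ (fImp (.or r p) (.or r q)) :=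
  .mp (.ax (.pl4 p q r)) h

theorem imp_trans (hpq : Der Φ (fImp p q)) (hqr : Der Φ (fImp q r)) : Der Φ (fImp p r) :=
  .mp (.mp (.ax (.pl4 q r (.neg p))) hqr) hpq

theorem or_inr_imp : Der Φ (fImp q (.or p q)) := imp_trans or_inl_imp or_comm_imp

theorem imp_self : Der Φ (fImp p p) := imp_trans or_inl_imp (.ax (.pl1 p))

theorem em : Der Φ (.or p (.neg p)) := .mp or_comm_imp imp_self

theorem not_not_intro : Der Φ (fImp p (.neg (.neg p))) := em

theorem not_not_elim : Der Φ (fImp (.neg (.neg p)) p) :=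
  .mp or_comm_imp (.mp (or_imp_or_right not_not_intro) em)

theorem mt (h : Der Φ (fImp p q)) : Der Φ (fImp (.neg q) (.neg p)) :=
  .mp or_comm_imp (.mp (or_imp_or_right not_not_intro) h)

theorem or_elim (hpr : Der Φ (fImp p r)) (hqr : Der Φ (fImp q r)) :
    Der Φ (fImp (.or p q) r) :=
  imp_trans (or_imp_or_right hqr)
    (imp_trans or_comm_imp (imp_trans (or_imp_or_right hpr) (.ax (.pl1 r))))

theorem imp_of_neg (h : Der Φ (.neg p)) : Der Φ (fImp p q) := .mp or_inl_imp h

theorem resolve_left (h : Der Φ (.or p q)) (hp : Der Φ (.neg p)) : Der Φ q :=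
  .mp (or_elim (imp_of_neg hp) imp_self) h

theorem resolve_right (h : Der Φ (.or p q)) (hq : Der Φ (.neg q)) : Der Φ p :=
  resolve_left (.mp or_comm_imp h) hq

theorem not_or (hp : Der Φ (.neg p)) (hq : Der Φ (.neg q)) : Der Φ (.neg (.or p q)) :=
  .mp (mt (or_elim imp_self (imp_of_neg hq))) hp

theorem absurd (hp : Der Φ p) (hnp : Der Φ (.neg p)) : Der Φ fBot := .mp (imp_of_neg hnp) hp

theorem and_iff : Der Φ (fAnd p q) ↔ Der Φ p ∧ Der Φ q where
  mp h := ⟨.mp (imp_trans (mt or_inl_imp) not_not_elim) h,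
    .mp (imp_trans (mt or_inr_imp) not_not_elim) h⟩
  mpr h := not_or (.mp not_not_intro h.1) (.mp not_not_intro h.2)

theorem iff_of_iff (h : Der Φ (fIff p q)) : Der Φ p ↔ Der Φ q :=
  ⟨.mp (and_iff.1 h).1, .mp (and_iff.1 h).2⟩

theorem imp_const : Der Φ (fImp q (fImp p q)) := or_inr_imp

theorem imp_comm : Der Φ (fImp (fImp p (fImp q r)) (fImp q (fImp p r))) :=
  or_elim (imp_trans or_inl_imp or_inr_imp)
    (or_elim or_inl_imp (imp_trans or_inr_imp or_inr_imp))

theorem imp_imp_contract : Der Φ (fImp (fImp p (fImp p r)) (fImp p r)) :=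
  or_elim or_inl_imp imp_self

theorem imp_distrib : Der Φ (fImp (fImp p (fImp q r)) (fImp (fImp p q) (fImp p r))) :=
  imp_trans (or_imp_or_right (.ax (.pl4 q r (.neg p))))
    (imp_trans imp_comm (or_imp_or_right imp_imp_contract))

theorem deduction (h : Der (insert ψ Φ) φ) : Der Φ (fImp ψ φ) := by
  induction h with
  | ax h => exact .mp imp_const (.ax h)
  | hyp h =>
    rcases h with rfl | h
    exacts [imp_self, .mp imp_const (.hyp h)]
  | mp _ _ ihpq ihp => exact .mp (.mp imp_distrib ihpq) ihp

theorem neg_of_insert_bot (h : Der (insert ψ Φ) fBot) : Der Φ (.neg ψ) :=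
  resolve_right (deduction h) (.mp not_not_intro em)

end Der

theorem consistent_iff {Φ : Set Fml} : Consistent Φ ↔ ¬ Der Φ fBot := prov_iff_der.not

theorem consistent_insert_neg {Φ : Set Fml} {φ : Fml} (h : ¬ Der Φ φ) :
    Consistent (insert (.neg φ) Φ) :=
  consistent_iff.2 fun hbot =>
    h (.mp Der.not_not_elim (Der.neg_of_insert_bot hbot))

def MaxConsistent (T : Set Fml) : Prop := Maximal Consistent T

theorem exists_maxConsistent_superset {Φ : Set Fml} (h : Consistent Φ) :
    ∃ T, Φ ⊆ T ∧ MaxConsistent T := by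
  refine zorn_subset_nonempty {Ψ | Consistent Ψ} (fun c hc hchain hne => ?_) Φ h
  refine ⟨⋃₀ c, consistent_iff.2 fun hbot => ?_, fun Ψ => Set.subset_sUnion_of_mem⟩
  obtain ⟨Γ, hΓc, hΓfin, hΓ⟩ := hbot.exists_finite_subset
  obtain ⟨Ψ, hΨ, hΓΨ⟩ :=
    hchain.directedOn.exists_mem_subset_of_finite_of_subset_sUnion hne hΓfin hΓc
  exact consistent_iff.1 (hc hΨ) (hΓ.mono hΓΨ)

namespace MaxConsistent

variable {T : Set Fml} (hT : MaxConsistent T) {p q ψ : Fml}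
include hT

theorem der_neg_of_notMem (h : ψ ∉ T) : Der T (.neg ψ) := by
  refine Der.neg_of_insert_bot (not_not.1 fun hcon => h ?_)
  exact hT.eq_of_subset (consistent_iff.2 hcon) (Set.subset_insert ψ T) ▸ Set.mem_insert ψ T

theorem mem_iff_der : ψ ∈ T ↔ Der T ψ :=
  ⟨.hyp, fun h => by_contra fun hψ => consistent_iff.1 hT.1 (h.absurd (hT.der_neg_of_notMem hψ))⟩

theorem neg_mem_iff : .neg ψ ∈ T ↔ ψ ∉ T :=
  ⟨fun hn hψ => consistent_iff.1 hT.1 (Der.absurd (.hyp hψ) (.hyp hn)),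
    fun h => hT.mem_iff_der.2 (hT.der_neg_of_notMem h)⟩

theorem or_mem_iff : .or p q ∈ T ↔ p ∈ T ∨ q ∈ T := by
  refine ⟨fun h => or_iff_not_imp_left.2 fun hp => ?_, fun h => hT.mem_iff_der.2 ?_⟩
  · exact hT.mem_iff_der.2 (Der.resolve_left (.hyp h) (hT.der_neg_of_notMem hp))
  · rcases h with h | h
    exacts [.mp Der.or_inl_imp (.hyp h), .mp Der.or_inr_imp (.hyp h)]

end MaxConsistent

theorem ARepl.refl {a b : Act} (x : Act) : ARepl a b x x := by
  induction x with
  | basic n => exact .basic n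
  | join _ _ ihx ihy => exact .join ihx ihy
  | meet _ _ ihx ihy => exact .meet ihx ihy
  | compl _ ihx => exact .compl ihx
  | zero => exact .zero
  | one => exact .one

def ProvEq (Φ : Set Fml) (x y : Act) : Prop := Der Φ (.eq x y)

theorem Der.of_frepl {Φ : Set Fml} {x y : Act} {p q : Fml} (hxy : ProvEq Φ x y)
    (hpq : FRepl x y p q) (hp : Der Φ p) : Der Φ q :=
  .mp (.mp (.ax (.subst hpq)) hxy) hp

namespace ProvEq

variable {Φ : Set Fml} {x y z w : Act}

theorem refl (x : Act) : ProvEq Φ x x := .ax (.eqRefl x)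

theorem symm (h : ProvEq Φ x y) : ProvEq Φ y x := .mp (.ax (.eqSymm x y)) h

theorem trans (hxy : ProvEq Φ x y) (hyz : ProvEq Φ y z) : ProvEq Φ x z :=
  .mp (.mp (.ax (.eqTrans x y z)) hxy) hyz

theorem of_arepl {u v : Act} (hxy : ProvEq Φ x y) (huv : ARepl x y u v) : ProvEq Φ u v :=
  Der.of_frepl hxy (.eq (.refl u) huv) (refl u)

theorem join (hxy : ProvEq Φ x y) (hzw : ProvEq Φ z w) : ProvEq Φ (.join x z) (.join y w) :=
  (hxy.of_arepl (.join .repl (.refl z))).trans (hzw.of_arepl (.join (.refl y) .repl))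

theorem meet (hxy : ProvEq Φ x y) (hzw : ProvEq Φ z w) : ProvEq Φ (.meet x z) (.meet y w) :=
  (hxy.of_arepl (.meet .repl (.refl z))).trans (hzw.of_arepl (.meet (.refl y) .repl))

theorem compl (hxy : ProvEq Φ x y) : ProvEq Φ (.compl x) (.compl y) :=
  hxy.of_arepl (.compl .repl)

end ProvEq

def provEqSetoid (Φ : Set Fml) : Setoid Act :=
  ⟨ProvEq Φ, ⟨ProvEq.refl, ProvEq.symm, ProvEq.trans⟩⟩

def Lindenbaum (Φ : Set Fml) : Type := Quotient (provEqSetoid Φ)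

namespace Lindenbaum

variable {Φ : Set Fml}

def mk (Φ : Set Fml) (x : Act) : Lindenbaum Φ := Quotient.mk (provEqSetoid Φ) x

theorem mk_surjective : Function.Surjective (mk Φ) := Quotient.mk_surjective

theorem mk_eq_mk {x y : Act} : mk Φ x = mk Φ y ↔ ProvEq Φ x y := Quotient.eq

-- The operations are local so that `⊔`, `⊓`, `ᶜ` have a single instance path, through this one.
instance : BooleanAlgebra (Lindenbaum Φ) :=
  letI : Max (Lindenbaum Φ) := ⟨Quotient.map₂ .join fun _ _ hxy _ _ hzw => hxy.join hzw⟩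
  letI : Min (Lindenbaum Φ) := ⟨Quotient.map₂ .meet fun _ _ hxy _ _ hzw => hxy.meet hzw⟩
  letI : Compl (Lindenbaum Φ) := ⟨Quotient.map .compl fun _ _ hxy => hxy.compl⟩
  letI : Top (Lindenbaum Φ) := ⟨mk Φ .one⟩
  letI : Bot (Lindenbaum Φ) := ⟨mk Φ .zero⟩
  BooleanAlgebra.ofLaws
    (by rintro ⟨x⟩ ⟨y⟩; exact mk_eq_mk.2 (.ax (.joinComm x y)))
    (by rintro ⟨x⟩ ⟨y⟩; exact mk_eq_mk.2 (.ax (.meetComm x y)))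
    (by rintro ⟨x⟩ ⟨y⟩ ⟨z⟩; exact mk_eq_mk.2 (.ax (.joinAssoc x y z)))
    (by rintro ⟨x⟩ ⟨y⟩ ⟨z⟩; exact mk_eq_mk.2 (.ax (.meetAssoc x y z)))
    (by rintro ⟨x⟩ ⟨y⟩ ⟨z⟩; exact mk_eq_mk.2 (.ax (.joinDistrib x y z)))
    (by rintro ⟨x⟩ ⟨y⟩ ⟨z⟩; exact mk_eq_mk.2 (.ax (.meetDistrib x y z)))
    (by rintro ⟨x⟩; exact mk_eq_mk.2 (.ax (.joinZero x)))
    (by rintro ⟨x⟩; exact mk_eq_mk.2 (.ax (.meetOne x)))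
    (by rintro ⟨x⟩; exact mk_eq_mk.2 (.ax (.joinCompl x)))
    (by rintro ⟨x⟩; exact mk_eq_mk.2 (.ax (.meetCompl x)))

theorem mk_join (x y : Act) : mk Φ (.join x y) = mk Φ x ⊔ mk Φ y := rfl
theorem mk_meet (x y : Act) : mk Φ (.meet x y) = mk Φ x ⊓ mk Φ y := rfl
theorem mk_compl (x : Act) : mk Φ (.compl x) = (mk Φ x)ᶜ := rfl
theorem mk_zero : mk Φ .zero = ⊥ := rfl

theorem nontrivial (h : Consistent Φ) : Nontrivial (Lindenbaum Φ) :=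
  ⟨⊥, ⊤, fun h01 => consistent_iff.1 h (Der.absurd (mk_eq_mk.1 h01) (.ax .nondeg))⟩

def provSet (Φ : Set Fml) (κ : Act → Fml) : Set (Lindenbaum Φ) := mk Φ '' {x | Der Φ (κ x)}

variable {κ : Act → Fml}

theorem mk_mem_provSet (hκ : ∀ x y, FRepl x y (κ x) (κ y)) {x : Act} :
    mk Φ x ∈ provSet Φ κ ↔ Der Φ (κ x) :=
  ⟨fun ⟨y, hy, hyx⟩ => Der.of_frepl (mk_eq_mk.1 hyx) (hκ y x) hy, fun h => ⟨x, h, rfl⟩⟩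

theorem isIdeal_provSet (hκ : ∀ x y, FRepl x y (κ x) (κ y))
    (hjoin : ∀ x y, Ax (fIff (κ (.join x y)) (fAnd (κ x) (κ y)))) : IsIdeal (provSet Φ κ) := by
  refine isIdeal_of_sup_mem_iff fun a b => ?_
  obtain ⟨x, rfl⟩ := mk_surjective a
  obtain ⟨y, rfl⟩ := mk_surjective b
  rw [← mk_join, mk_mem_provSet hκ, mk_mem_provSet hκ, mk_mem_provSet hκ]
  exact (Der.iff_of_iff (.ax (hjoin x y))).trans Der.and_iff

theorem mk_mem_provSet_perm {x : Act} : mk Φ x ∈ provSet Φ .perm ↔ Der Φ (.perm x) :=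
  mk_mem_provSet fun _ _ => .perm .repl

theorem mk_mem_provSet_forb {x : Act} : mk Φ x ∈ provSet Φ .forb ↔ Der Φ (.forb x) :=
  mk_mem_provSet fun _ _ => .forb .repl

theorem isIdeal_provSet_perm : IsIdeal (provSet Φ .perm) :=
  isIdeal_provSet (fun _ _ => .perm .repl) Ax.d1

theorem isIdeal_provSet_forb : IsIdeal (provSet Φ .forb) :=
  isIdeal_provSet (fun _ _ => .forb .repl) Ax.d2

theorem provSet_perm_inter_forb : provSet Φ .perm ∩ provSet Φ .forb = {⊥} := by
  ext a
  obtain ⟨x, rfl⟩ := mk_surjective a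
  rw [Set.mem_inter_iff, mk_mem_provSet_perm, mk_mem_provSet_forb, Set.mem_singleton_iff,
    ← mk_zero, mk_eq_mk]
  exact ((Der.iff_of_iff (.ax (.d3 x))).trans Der.and_iff).symm

def canonicalVal (Φ : Set Fml) (n : ℕ) : Lindenbaum Φ := mk Φ (.basic n)

theorem evalAct_canonicalVal (x : Act) : evalAct (canonicalVal Φ) x = mk Φ x := by
  induction x with
  | basic n => rfl
  | join x y ihx ihy => rw [evalAct, ihx, ihy, mk_join]
  | meet x y ihx ihy => rw [evalAct, ihx, ihy, mk_meet]
  | compl x ihx => rw [evalAct, ihx, mk_compl]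
  | zero => rfl
  | one => rfl

end Lindenbaum

open Lindenbaum in
theorem MaxConsistent.sat_iff_mem {T : Set Fml} (hT : MaxConsistent T) (ψ : Fml) :
    Sat (provSet T .perm) (provSet T .forb) (canonicalVal T) ψ ↔ ψ ∈ T := by
  induction ψ with
  | neg p ih => rw [Sat, ih, hT.neg_mem_iff]
  | or p q ihp ihq => rw [Sat, ihp, ihq, hT.or_mem_iff]
  | eq x y => rw [Sat, evalAct_canonicalVal, evalAct_canonicalVal, mk_eq_mk, hT.mem_iff_der]; rfl
  | perm x => rw [Sat, evalAct_canonicalVal, mk_mem_provSet_perm, hT.mem_iff_der]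
  | forb x => rw [Sat, evalAct_canonicalVal, mk_mem_provSet_forb, hT.mem_iff_der]

end DAL

/-- Completeness of DAL (Segerberg): if φ is an algebraic
consequence of Φ, then Φ ⊢ φ in the Hilbert system for DAL. -/
theorem DAL.completeness (Φ : Set DAL.Fml) (φ : DAL.Fml) :
    DAL.ACons Φ φ → DAL.Prov Φ φ := by
  intro h
  rw [DAL.prov_iff_der]
  by_contra hφ
  obtain ⟨T, hΦT, hT⟩ := DAL.exists_maxConsistent_superset (DAL.consistent_insert_neg hφ)
  have := DAL.Lindenbaum.nontrivial hT.1
  have hsat := h _ _ _ (DAL.Lindenbaum.canonicalVal T) DAL.Lindenbaum.isIdeal_provSet_perm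
    DAL.Lindenbaum.isIdeal_provSet_forb DAL.Lindenbaum.provSet_perm_inter_forb
    fun ψ hψ => (hT.sat_iff_mem ψ).2 (hΦT (Set.mem_insert_of_mem _ hψ))
  exact hT.neg_mem_iff.1 (hΦT (Set.mem_insert _ Φ)) ((hT.sat_iff_mem φ).1 hsat)
end

section
/- The default consequence relation |≈_Δ interprets provability ⊢ (i.e., for all Φ and φ, Φ ⊢ φ implies Φ |≈_Δ φ) if and only if for all sets of formulas Φ the set of Reiter extensions of Φ under Δ is nonempty. -/
namespace CPL

/-- Formulas of classical propositional logic over countably many variables,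
with ¬ and ∨ as primitive connectives. -/
inductive Fml : Type where
  | var : ℕ → Fml
  | neg : Fml → Fml
  | or : Fml → Fml → Fml

/-- Material implication, defined from ¬ and ∨. -/
def fImp (p q : Fml) : Fml := .or (.neg p) q
/-- Falsum. -/
def fBot : Fml := .neg (.or (.var 0) (.neg (.var 0)))

/-- A complete classical set of axioms for ¬ and ∨ (Principia Mathematica style). -/
inductive Ax : Fml → Prop where
  | pl1 (p : Fml) : Ax (fImp (.or p p) p)
  | pl2 (p q : Fml) : Ax (fImp p (.or p q))
  | pl3 (p q : Fml) : Ax (fImp (.or p q) (.or q p))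
  | pl4 (p q r : Fml) : Ax (fImp (fImp p q) (fImp (.or r p) (.or r q)))

/-- Provability Φ ⊢ φ in classical propositional logic (axioms, hypotheses,
modus ponens). -/
inductive Prov (Φ : Set Fml) : Fml → Prop where
  | ax {p : Fml} : Ax p → Prov Φ p
  | hyp {p : Fml} : p ∈ Φ → Prov Φ p
  | mp {p q : Fml} : Prov Φ (fImp p q) → Prov Φ p → Prov Φ q

/-- Deductive closure Cn(Ψ) = {φ : Ψ ⊢ φ}. -/
def Cn (Ψ : Set Fml) : Set Fml := {φ | Prov Ψ φ}

/-- A default π:ρ/χ with prerequisite, justification, and consequent. -/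
structure Default : Type where
  pre : Fml
  jus : Fml
  con : Fml

/-- A default is normal iff its justification equals its consequent. -/
def Default.Normal (d : Default) : Prop := d.jus = d.con

/-- The operator Γ^Φ_Δ : `GammaSet Φ Δ Ψ` is the smallest set `X` of formulas such
that (i) Φ ⊆ X, (ii) X is deductively closed, and (iii) for each default π:ρ/χ in Δ,
if π ∈ X and ¬ρ ∉ Ψ then χ ∈ X. -/
def GammaSet (Φ : Set Fml) (Δ : Set Default) (Ψ : Set Fml) : Set Fml :=
  ⋂₀ {X | Φ ⊆ X ∧ X = Cn X ∧ ∀ d ∈ Δ, d.pre ∈ X → Fml.neg d.jus ∉ Ψ → d.con ∈ X}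

/-- `E` is a Reiter extension of Φ under Δ iff it is a fixed point of Γ^Φ_Δ. -/
def IsExtension (Φ : Set Fml) (Δ : Set Default) (E : Set Fml) : Prop :=
  E = GammaSet Φ Δ E

/-- Default consequence (Φ |≈_Δ φ): some Reiter extension E of Φ under Δ
satisfies E ⊢ φ. -/
def DCons (Φ : Set Fml) (Δ : Set Default) (φ : Fml) : Prop :=
  ∃ E, IsExtension Φ Δ E ∧ Prov E φ

/-- |≈_Δ interprets ⊢ iff whenever Φ ⊢ φ, also Φ |≈_Δ φ. -/
def Interprets (Δ : Set Default) : Prop :=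
  ∀ (Φ : Set Fml) (φ : Fml), Prov Φ φ → DCons Φ Δ φ

end CPL


namespace CPL

theorem Prov.mono {Φ Ψ : Set Fml} (h : Φ ⊆ Ψ) {φ : Fml} (hp : Prov Φ φ) :
    Prov Ψ φ := by
  induction hp with
  | ax a => exact Prov.ax a
  | hyp m => exact Prov.hyp (h m)
  | mp _ _ ih1 ih2 => exact Prov.mp ih1 ih2

theorem subset_of_isExtension {Φ : Set Fml} {Δ : Set Default} {E : Set Fml}
    (h : IsExtension Φ Δ E) : Φ ⊆ E := by
  rw [h]
  intro x hx X hX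
  exact hX.1 hx

end CPL

/-- The default consequence relation |≈_Δ interprets ⊢ iff for all
sets of formulas Φ, the set of Reiter extensions of Φ under Δ is nonempty. -/
theorem CPL.interprets_iff_extensions_exist (Δ : Set CPL.Default) :
    CPL.Interprets Δ ↔ ∀ Φ : Set CPL.Fml, ∃ E, CPL.IsExtension Φ Δ E := by
  constructor
  · intro h Φ
    obtain ⟨E, hE, _⟩ := h Φ (CPL.fImp (.or (.var 0) (.var 0)) (.var 0))
      (CPL.Prov.ax (CPL.Ax.pl1 _))
    exact ⟨E, hE⟩
  · intro h Φ φ hp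
    obtain ⟨E, hE⟩ := h Φ
    exact ⟨E, hE, CPL.Prov.mono (CPL.subset_of_isExtension hE) hp⟩
end

section
/- If Δ is a set of normal defaults, then the default consequence relation |≈_Δ interprets provability ⊢; in particular, for every set Φ of formulas there exists at least one Reiter extension of Φ under Δ. -/
namespace CPL

/-! ### Basic provability lemmas -/

theorem prov_mono {Φ Ψ : Set Fml} (h : Φ ⊆ Ψ) {p : Fml} (hp : Prov Φ p) : Prov Ψ p := by
  induction hp with
  | ax a => exact Prov.ax a
  | hyp a => exact Prov.hyp (h a)
  | mp _ _ ih1 ih2 => exact Prov.mp ih1 ih2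

variable {Φ : Set Fml}

theorem syllT (a b c : Fml) : Prov Φ (fImp (fImp b c) (fImp (fImp a b) (fImp a c))) :=
  Prov.ax (Ax.pl4 b c (.neg a))

theorem syllR {a b c : Fml} (h1 : Prov Φ (fImp a b)) (h2 : Prov Φ (fImp b c)) :
    Prov Φ (fImp a c) :=
  Prov.mp (Prov.mp (syllT a b c) h2) h1

theorem monoR {a b : Fml} (r : Fml) (h : Prov Φ (fImp a b)) :
    Prov Φ (fImp (.or r a) (.or r b)) :=
  Prov.mp (Prov.ax (Ax.pl4 a b r)) h

theorem monoL {a b : Fml} (r : Fml) (h : Prov Φ (fImp a b)) :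
    Prov Φ (fImp (.or a r) (.or b r)) :=
  syllR (Prov.ax (Ax.pl3 a r)) (syllR (monoR r h) (Prov.ax (Ax.pl3 r b)))

theorem idT (p : Fml) : Prov Φ (fImp p p) :=
  syllR (Prov.ax (Ax.pl2 p p)) (Prov.ax (Ax.pl1 p))

theorem dilemma {a b s : Fml} (h1 : Prov Φ (fImp a s)) (h2 : Prov Φ (fImp b s)) :
    Prov Φ (fImp (.or a b) s) :=
  syllR (monoL b h1) (syllR (monoR s h2) (Prov.ax (Ax.pl1 s)))

theorem addR (b a : Fml) : Prov Φ (fImp b (.or a b)) :=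
  syllR (Prov.ax (Ax.pl2 b a)) (Prov.ax (Ax.pl3 b a))

theorem kT (q p : Fml) : Prov Φ (fImp q (fImp p q)) := addR q (.neg p)

theorem lemT (p : Fml) : Prov Φ (.or p (.neg p)) :=
  Prov.mp (Prov.ax (Ax.pl3 (.neg p) p)) (idT p)

theorem dni (p : Fml) : Prov Φ (fImp p (.neg (.neg p))) := lemT (.neg p)

theorem exfalsoT (ψ : Fml) : Prov Φ (fImp fBot ψ) :=
  Prov.mp (Prov.ax (Ax.pl2 (.neg (.neg (.or (.var 0) (.neg (.var 0))))) ψ))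
    (Prov.mp (dni _) (lemT (.var 0)))

theorem absurdT (χ : Fml) : Prov Φ (fImp χ (fImp (.neg χ) fBot)) :=
  syllR (dni χ) (Prov.ax (Ax.pl2 (.neg (.neg χ)) fBot))

theorem assocT (p q r : Fml) : Prov Φ (fImp (.or p (.or q r)) (.or q (.or p r))) :=
  dilemma (syllR (Prov.ax (Ax.pl2 p r)) (addR (.or p r) q)) (monoR q (addR r p))

theorem commT (p a q : Fml) :
    Prov Φ (fImp (fImp p (fImp a q)) (fImp a (fImp p q))) :=
  assocT (.neg p) (.neg a) q

theorem contrT (p q : Fml) : Prov Φ (fImp (fImp p (fImp p q)) (fImp p q)) :=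
  dilemma (Prov.ax (Ax.pl2 (.neg p) q)) (idT (fImp p q))

/-- Deduction theorem. -/
theorem deduction {Ψ : Set Fml} {p q : Fml} (h : Prov (Ψ ∪ {p}) q) :
    Prov Ψ (fImp p q) := by
  induction h with
  | ax a => exact Prov.mp (kT _ _) (Prov.ax a)
  | @hyp r hr =>
    rcases hr with hr | hr
    · exact Prov.mp (kT _ _) (Prov.hyp hr)
    · rcases hr
      exact idT p
  | @mp a q _ _ ih1 ih2 =>
    exact Prov.mp (contrT p q)
      (Prov.mp (Prov.mp (syllT p a (fImp p q)) (Prov.mp (commT p a q) ih1)) ih2)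

theorem negIntro {Ψ : Set Fml} {χ : Fml} (h : Prov (Ψ ∪ {χ}) fBot) :
    Prov Ψ (.neg χ) :=
  Prov.mp (dilemma (idT (.neg χ)) (exfalsoT (.neg χ))) (deduction h)

theorem botOf {Ψ : Set Fml} {χ : Fml} (h1 : Prov Ψ χ) (h2 : Prov Ψ (.neg χ)) :
    Prov Ψ fBot :=
  Prov.mp (Prov.mp (absurdT χ) h1) h2

/-! ### Cn facts -/

theorem subset_cn {Ψ : Set Fml} : Ψ ⊆ Cn Ψ := fun _ h => Prov.hyp h

theorem prov_of_prov_cn {Ψ : Set Fml} {φ : Fml} (h : Prov (Cn Ψ) φ) : Prov Ψ φ := by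
  induction h with
  | ax a => exact Prov.ax a
  | hyp a => exact a
  | mp _ _ ih1 ih2 => exact Prov.mp ih1 ih2

theorem cn_cn (Ψ : Set Fml) : Cn (Cn Ψ) = Cn Ψ :=
  Set.Subset.antisymm (fun _ h => prov_of_prov_cn h) subset_cn

theorem prov_iUnion {T : ℕ → Set Fml} (hm : Monotone T) {φ : Fml}
    (h : Prov (⋃ n, T n) φ) : ∃ n, Prov (T n) φ := by
  induction h with
  | ax a => exact ⟨0, Prov.ax a⟩
  | hyp a =>
    obtain ⟨n, hn⟩ := Set.mem_iUnion.1 a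
    exact ⟨n, Prov.hyp hn⟩
  | mp _ _ ih1 ih2 =>
    obtain ⟨n1, h1⟩ := ih1
    obtain ⟨n2, h2⟩ := ih2
    exact ⟨max n1 n2, Prov.mp (prov_mono (hm (le_max_left n1 n2)) h1)
      (prov_mono (hm (le_max_right n1 n2)) h2)⟩

/-! ### Countability and fair enumeration -/

private def encF : Fml → ℕ
  | .var n => Nat.pair 0 n
  | .neg p => Nat.pair 1 (encF p)
  | .or p q => Nat.pair 2 (Nat.pair (encF p) (encF q))

private theorem encF_inj : Function.Injective encF := by
  intro p
  induction p with
  | var n => intro q h; cases q <;> simp [encF, Nat.pair_eq_pair] at h; simp [h]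
  | neg p ih =>
    intro q h; cases q <;> simp [encF, Nat.pair_eq_pair] at h
    rw [ih h]
  | or p1 p2 ih1 ih2 =>
    intro q h; cases q <;> simp [encF, Nat.pair_eq_pair] at h
    rw [ih1 h.1, ih2 h.2]

instance : Countable Fml := encF_inj.countable

instance : Countable Default := by
  have : Function.Injective (fun d : Default => (d.pre, d.jus, d.con)) := by
    rintro ⟨a, b, c⟩ ⟨a', b', c'⟩ h
    simpa using h
  exact this.countable

instance : Nonempty Default := ⟨⟨.var 0, .var 0, .var 0⟩⟩

theorem exists_fair_enum : ∃ e : ℕ → Default, ∀ d n, ∃ m, n ≤ m ∧ e m = d := by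
  obtain ⟨g, hg⟩ := exists_surjective_nat Default
  refine ⟨fun m => g (Nat.unpair m).1, fun d n => ?_⟩
  obtain ⟨k, hk⟩ := hg d
  refine ⟨Nat.pair k n, Nat.right_le_pair k n, ?_⟩
  show g (Nat.unpair (Nat.pair k n)).1 = d
  rw [Nat.unpair_pair]
  exact hk

/-! ### The iterative construction -/

/-- The family whose intersection is `GammaSet`. -/
def Fam (Φ : Set Fml) (Δ : Set Default) (Ψ : Set Fml) : Set (Set Fml) :=
  {X | Φ ⊆ X ∧ X = Cn X ∧ ∀ d ∈ Δ, d.pre ∈ X → Fml.neg d.jus ∉ Ψ → d.con ∈ X}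

theorem gammaSet_eq (Φ : Set Fml) (Δ : Set Default) (Ψ : Set Fml) :
    GammaSet Φ Δ Ψ = ⋂₀ Fam Φ Δ Ψ := rfl

theorem phi_subset_gamma (Φ : Set Fml) (Δ : Set Default) (Ψ : Set Fml) :
    Φ ⊆ GammaSet Φ Δ Ψ := fun p hp => Set.mem_sInter.2 fun _ hX => hX.1 hp

/-- The approximating chain. -/
def chain (Φ : Set Fml) (Δ : Set Default) (e : ℕ → Default) : ℕ → Set Fml
  | 0 => Φ
  | n + 1 =>
    chain Φ Δ e n ∪
      {p | e n ∈ Δ ∧ Prov (chain Φ Δ e n) (e n).pre ∧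
        ¬ Prov (chain Φ Δ e n) (.neg (e n).con) ∧ p = (e n).con}

theorem chain_mono (Φ : Set Fml) (Δ : Set Default) (e : ℕ → Default) :
    Monotone (chain Φ Δ e) :=
  monotone_nat_of_le_succ fun n => Set.subset_union_left

theorem chain_consistent (Φ : Set Fml) (Δ : Set Default) (e : ℕ → Default)
    (hcon : ¬ Prov Φ fBot) : ∀ n, ¬ Prov (chain Φ Δ e n) fBot := by
  intro n
  induction n with
  | zero => exact hcon
  | succ n ih =>
    intro h
    by_cases hg : e n ∈ Δ ∧ Prov (chain Φ Δ e n) (e n).pre ∧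
        ¬ Prov (chain Φ Δ e n) (.neg (e n).con)
    · have heq : chain Φ Δ e (n + 1) = chain Φ Δ e n ∪ {(e n).con} := by
        ext p
        constructor
        · rintro (hp | hp)
          · exact Or.inl hp
          · exact Or.inr hp.2.2.2
        · rintro (hp | hp)
          · exact Or.inl hp
          · exact Or.inr ⟨hg.1, hg.2.1, hg.2.2, hp⟩
      rw [heq] at h
      exact hg.2.2 (negIntro h)
    · have heq : chain Φ Δ e (n + 1) = chain Φ Δ e n := by
        ext p
        constructor
        · rintro (hp | ⟨h1, h2, h3, _⟩)
          · exact hp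
          · exact absurd ⟨h1, h2, h3⟩ hg
        · exact fun hp => Or.inl hp
      rw [heq] at h
      exact ih h

theorem exists_extension (Δ : Set Default) (hΔ : ∀ d ∈ Δ, d.Normal) (Φ : Set Fml) :
    ∃ E, IsExtension Φ Δ E := by
  by_cases hcon : Prov Φ fBot
  · refine ⟨Set.univ, Set.Subset.antisymm ?_ (Set.subset_univ _)⟩
    intro p _
    refine Set.mem_sInter.2 fun X hX => ?_
    have : Prov X p := prov_mono hX.1 (Prov.mp (exfalsoT p) hcon)
    rw [hX.2.1]
    exact this
  · obtain ⟨e, he⟩ := exists_fair_enum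
    set T : ℕ → Set Fml := chain Φ Δ e with hT
    set U : Set Fml := ⋃ n, T n with hU
    have hmono := chain_mono Φ Δ e
    have hcons := chain_consistent Φ Δ e hcon
    have hsubU : ∀ n, T n ⊆ U := fun n => Set.subset_iUnion T n
    -- no negation of any element of the chain is derivable
    have hkey : ∀ {χ n}, χ ∈ T n → Fml.neg χ ∉ Cn U := by
      intro χ n hχ hneg
      obtain ⟨m, hm⟩ := prov_iUnion hmono hneg
      exact hcons (max n m)
        (botOf (Prov.hyp (hmono (le_max_left n m) hχ))
          (prov_mono (hmono (le_max_right n m)) hm))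
    refine ⟨Cn U, ?_⟩
    have hmem : Cn U ∈ Fam Φ Δ (Cn U) := by
      refine ⟨fun p hp => Prov.hyp (hsubU 0 hp), (cn_cn U).symm, ?_⟩
      intro d hd hpre hjus
      obtain ⟨n, hn⟩ := prov_iUnion hmono hpre
      obtain ⟨m, hnm, hem⟩ := he d n
      have hcond : e m ∈ Δ ∧ Prov (T m) (e m).pre ∧ ¬ Prov (T m) (.neg (e m).con) := by
        rw [hem]
        refine ⟨hd, prov_mono (hmono hnm) hn, fun hne => ?_⟩
        have : Fml.neg d.con ∈ Cn U := prov_mono (hsubU m) hne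
        rw [hΔ d hd] at hjus
        exact hjus this
      have : d.con ∈ T (m + 1) := by
        rw [show T (m + 1) = chain Φ Δ e (m + 1) from rfl]
        exact Or.inr ⟨hcond.1, hcond.2.1, hcond.2.2, by rw [hem]⟩
      exact Prov.hyp (hsubU (m + 1) this)
    refine Set.Subset.antisymm ?_ (Set.sInter_subset_of_mem hmem)
    -- Cn U ⊆ every member of the family
    intro p hp
    refine Set.mem_sInter.2 fun X hX => ?_
    have hTX : ∀ n, T n ⊆ X := by
      intro n
      induction n with
      | zero => exact hX.1
      | succ n ih =>
        rintro q (hq | ⟨h1, h2, h3, rfl⟩)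
        · exact ih hq
        · refine hX.2.2 (e n) h1 ?_ ?_
          · rw [hX.2.1]
            exact prov_mono ih h2
          · rw [hΔ (e n) h1]
            have : (e n).con ∈ T (n + 1) :=
              Or.inr ⟨h1, h2, h3, rfl⟩
            exact hkey this
    have hUX : U ⊆ X := Set.iUnion_subset hTX
    rw [hX.2.1]
    exact prov_mono hUX hp

end CPL

/-- If Δ is a set of normal defaults, then |≈_Δ interprets ⊢; in
particular, every set Φ of formulas has at least one Reiter extension under Δ. -/
theorem CPL.normal_interprets (Δ : Set CPL.Default) (hΔ : ∀ d ∈ Δ, d.Normal) :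
    CPL.Interprets Δ ∧ ∀ Φ : Set CPL.Fml, ∃ E, CPL.IsExtension Φ Δ E := by
  refine ⟨?_, CPL.exists_extension Δ hΔ⟩
  intro Φ φ hprov
  obtain ⟨E, hE⟩ := CPL.exists_extension Δ hΔ Φ
  refine ⟨E, hE, ?_⟩
  have hΦE : Φ ⊆ E := by
    rw [hE]
    exact CPL.phi_subset_gamma Φ Δ E
  exact CPL.prov_mono hΦE hprov
end
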